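/- Fix a cost function ρ : X × X → ℝ≥0 ∪ {∞} with ρ(x,x) = 0 for all x. For distributions D₁, D₂ on X and any D₁' ∈ C_ρ(D₁), there exists D₂' ∈ C_ρ(D₂) such that d_TV(D₁', D₂') ≤ d_TV(D₁, D₂). Here C_ρ(D) is the set of distributions D' such that there exists a coupling of x ∼ D and x' ∼ D' with E[ρ(x,x')] ≤ 1. -/

import Mathlib

open Finset
open scoped Classical ENNReal

noncomputable section

/-- `p` is a probability mass function on the finite space `X`. -/
def IsPMF {X : Type*} [Fintype X] (p : X → ℝ) : Prop :=
  (∀ x, 0 ≤ p x) ∧ ∑ x, p x = 1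

/-- Total variation distance between two pmfs on a finite space. -/
noncomputable def TV {X : Type*} [Fintype X] (q r : X → ℝ) : ℝ :=
  (∑ x, |q x - r x|) / 2

/-- `π` is a coupling of the pmfs `q` and `r`. -/
def IsCoupling {X : Type*} [Fintype X] (π : X × X → ℝ) (q r : X → ℝ) : Prop :=
  IsPMF π ∧ (∀ x, ∑ y, π (x, y) = q x) ∧ (∀ y, ∑ x, π (x, y) = r y)

/-- `D' ∈ C_ρ(D)`: there is a coupling of `x ∼ D` and `x' ∼ D'` with `E[ρ(x,x')] ≤ 1`. -/
def InCorr {X : Type*} [Fintype X] (ρ : X → X → ℝ≥0∞) (D D' : X → ℝ) : Prop :=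
  ∃ π : X × X → ℝ, IsCoupling π D D' ∧
    ∑ xy : X × X, ENNReal.ofReal (π xy) * ρ xy.1 xy.2 ≤ 1

/-!
Read a Markov kernel `K` off the given coupling of `D₁` and `D₁'`, so that `D₁' = K D₁`. Push
only the common part `min D₁ D₂` through `K` and leave the excess `D₂ - min D₁ D₂` in place. The
resulting coupling of `D₂` moves every point with at most the old probability, so it costs no
more, and it is `ℓ¹`-close to the old coupling: the difference is at most the mass of
`D₁ - min D₁ D₂` plus that of `D₂ - min D₁ D₂`, which is `2 d_TV(D₁, D₂)`. Second marginals are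
no farther apart than the couplings.
-/

lemma abs_sub_eq_sub_min_add_sub_min (a b : ℝ) : |a - b| = (a - min a b) + (b - min a b) := by
  linarith [max_sub_min_eq_abs' a b, min_add_max a b]

lemma min_div_mul_cancel_left {a b : ℝ} (hb : 0 ≤ b) : min a b / a * a = min a b := by
  rcases eq_or_ne a 0 with rfl | ha
  · simp [hb]
  · exact div_mul_cancel₀ _ ha

lemma sum_abs_sub_sum_fst_le {X Y : Type*} [Fintype X] [Fintype Y] (f g : X × Y → ℝ) :
    ∑ y, |∑ x, f (x, y) - ∑ x, g (x, y)| ≤ ∑ p, |f p - g p| := by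
  rw [Fintype.sum_prod_type, Finset.sum_comm]
  gcongr with y
  rw [← Finset.sum_sub_distrib]
  exact abs_sum_le_sum_abs _ _

section

variable {X : Type*} [Fintype X]

lemma IsCoupling.isPMF_left {π : X × X → ℝ} {q r : X → ℝ} (hπ : IsCoupling π q r) :
    IsPMF q := by
  obtain ⟨⟨hπ₀, hπ₁⟩, hq, -⟩ := hπ
  refine ⟨fun x => hq x ▸ Finset.sum_nonneg fun y _ => hπ₀ _, ?_⟩
  simp_rw [← hq, ← hπ₁, Fintype.sum_prod_type]

lemma IsCoupling.isPMF_right {π : X × X → ℝ} {q r : X → ℝ} (hπ : IsCoupling π q r) :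
    IsPMF r := by
  obtain ⟨⟨hπ₀, hπ₁⟩, -, hr⟩ := hπ
  refine ⟨fun y => hr y ▸ Finset.sum_nonneg fun x _ => hπ₀ _, ?_⟩
  simp_rw [← hr, ← hπ₁, Fintype.sum_prod_type_right]

lemma TV_le_of_isCoupling {π π' : X × X → ℝ} {q r q' r' : X → ℝ} (hπ : IsCoupling π q r)
    (hπ' : IsCoupling π' q' r') : TV r r' ≤ (∑ p, |π p - π' p|) / 2 := by
  unfold TV
  rw [← funext hπ.2.2, ← funext hπ'.2.2]
  gcongr
  exact sum_abs_sub_sum_fst_le π π'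

/-- Where `D₁ x = 0` the quotient is `0` by Lean's convention; this is harmless, since then
`min D₁ D₂ x = 0` as well. -/
def transportOverlap (π : X × X → ℝ) (D₁ D₂ : X → ℝ) (p : X × X) : ℝ :=
  min (D₁ p.1) (D₂ p.1) / D₁ p.1 * π p +
    if p.2 = p.1 then D₂ p.1 - min (D₁ p.1) (D₂ p.1) else 0

variable {π : X × X → ℝ} {D₁ D₁' D₂ : X → ℝ}

lemma transportOverlap_nonneg (hπ : IsCoupling π D₁ D₁') (hD₂ : 0 ≤ D₂) (p : X × X) :
    0 ≤ transportOverlap π D₁ D₂ p := by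
  have hD₁ := hπ.isPMF_left.1 p.1
  refine add_nonneg (mul_nonneg (div_nonneg (le_min hD₁ (hD₂ _)) hD₁) (hπ.1.1 p)) ?_
  split_ifs
  · exact sub_nonneg.2 (min_le_right _ _)
  · rfl

lemma sum_transportOverlap_snd (hπ : IsCoupling π D₁ D₁') (hD₂ : 0 ≤ D₂) (x : X) :
    ∑ y, transportOverlap π D₁ D₂ (x, y) = D₂ x := by
  simp only [transportOverlap, Finset.sum_add_distrib, ← Finset.mul_sum, hπ.2.1 x,
    min_div_mul_cancel_left (hD₂ x), Finset.sum_ite_eq', Finset.mem_univ, if_true]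
  ring

lemma isCoupling_transportOverlap (hπ : IsCoupling π D₁ D₁') (hD₂ : IsPMF D₂) :
    IsCoupling (transportOverlap π D₁ D₂) D₂ fun y => ∑ x, transportOverlap π D₁ D₂ (x, y) := by
  refine ⟨⟨transportOverlap_nonneg hπ hD₂.1, ?_⟩, sum_transportOverlap_snd hπ hD₂.1,
    fun _ => rfl⟩
  simp_rw [Fintype.sum_prod_type, sum_transportOverlap_snd hπ hD₂.1, hD₂.2]

lemma sum_cost_transportOverlap_le (ρ : X → X → ℝ≥0∞) (hρ : ∀ x, ρ x x = 0)
    (hπ : IsCoupling π D₁ D₁') :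
    ∑ p : X × X, ENNReal.ofReal (transportOverlap π D₁ D₂ p) * ρ p.1 p.2 ≤
      ∑ p : X × X, ENNReal.ofReal (π p) * ρ p.1 p.2 := by
  refine Finset.sum_le_sum fun ⟨x, y⟩ _ => ?_
  rcases eq_or_ne y x with rfl | hxy
  · simp [hρ]
  · simp only [transportOverlap, if_neg hxy, add_zero]
    gcongr
    exact mul_le_of_le_one_left (hπ.1.1 _)
      (div_le_one_of_le₀ (min_le_left _ _) (hπ.isPMF_left.1 x))

lemma sum_abs_sub_transportOverlap_le (hπ : IsCoupling π D₁ D₁') (hD₂ : 0 ≤ D₂) :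
    ∑ p, |π p - transportOverlap π D₁ D₂ p| ≤ ∑ x, |D₁ x - D₂ x| := by
  rw [Fintype.sum_prod_type]
  refine Finset.sum_le_sum fun x _ => ?_
  set m := min (D₁ x) (D₂ x)
  set e : X → ℝ := fun y => if y = x then D₂ x - m else 0
  have he : ∀ y, 0 ≤ e y := fun y => by
    simp only [e]; split_ifs
    · exact sub_nonneg.2 (min_le_right _ _)
    · rfl
  have hc : 0 ≤ 1 - m / D₁ x :=
    sub_nonneg.2 (div_le_one_of_le₀ (min_le_left _ _) (hπ.isPMF_left.1 x))
  calc ∑ y, |π (x, y) - transportOverlap π D₁ D₂ (x, y)|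
      = ∑ y, |(1 - m / D₁ x) * π (x, y) - e y| := by
        congr! 2 with y; simp only [transportOverlap, e, m]; ring
    _ ≤ ∑ y, ((1 - m / D₁ x) * π (x, y) + e y) := by
        gcongr with y
        refine (abs_sub _ _).trans_eq ?_
        rw [abs_of_nonneg (mul_nonneg hc (hπ.1.1 _)), abs_of_nonneg (he y)]
    _ = (D₁ x - m) + (D₂ x - m) := by
        rw [Finset.sum_add_distrib, ← Finset.mul_sum, hπ.2.1 x, sub_mul, one_mul,
          min_div_mul_cancel_left (hD₂ x)]
        simp [e, m]
    _ = |D₁ x - D₂ x| := (abs_sub_eq_sub_min_add_sub_min _ _).symm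

end

theorem statement9_general {X : Type*} [Fintype X] (ρ : X → X → ℝ≥0∞) (hρ : ∀ x, ρ x x = 0)
    (D₁ D₂ D₁' : X → ℝ) (hD₂ : IsPMF D₂)
    (h : InCorr ρ D₁ D₁') :
    ∃ D₂' : X → ℝ, IsPMF D₂' ∧ InCorr ρ D₂ D₂' ∧ TV D₁' D₂' ≤ TV D₁ D₂ := by
  obtain ⟨π, hπ, hcost⟩ := h
  have hπ₂ := isCoupling_transportOverlap hπ hD₂
  refine ⟨_, hπ₂.isPMF_right, ⟨_, hπ₂, (sum_cost_transportOverlap_le ρ hρ hπ).trans hcost⟩, ?_⟩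
  calc TV D₁' _ ≤ (∑ p, |π p - transportOverlap π D₁ D₂ p|) / 2 := TV_le_of_isCoupling hπ hπ₂
    _ ≤ TV D₁ D₂ := by
      unfold TV
      gcongr
      exact sum_abs_sub_transportOverlap_le hπ hD₂.1

/-- Lipschitzness of corruptions: for any cost function `ρ`, distributions `D₁, D₂`, and any
`D₁' ∈ C_ρ(D₁)`, there is `D₂' ∈ C_ρ(D₂)` with `d_TV(D₁', D₂') ≤ d_TV(D₁, D₂)`. -/
theorem statement9 {X : Type*} [Fintype X] (ρ : X → X → ℝ≥0∞) (hρ : ∀ x, ρ x x = 0)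
    (D₁ D₂ D₁' : X → ℝ) (hD₁ : IsPMF D₁) (hD₂ : IsPMF D₂) (hD₁' : IsPMF D₁')
    (h : InCorr ρ D₁ D₁') :
    ∃ D₂' : X → ℝ, IsPMF D₂' ∧ InCorr ρ D₂ D₂' ∧ TV D₁' D₂' ≤ TV D₁ D₂ :=
  statement9_general ρ hρ D₁ D₂ D₁' hD₂ h
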